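/- arXiv:2112.10826 — 5 statements merged into one kernel-verified Lean document; each statement's English description precedes it below -/
import Mathlib

section
/- Let ε ∈ (0,1), η = 2ε/(1−ε), x > 0 and D > 0. Assume D^(−η) < ((1+ε)² + 4εD)·x² (supersonic condition) and that −2/x + 2x(1+ε)²(D−1)/(D^(−η) − ((1+ε)²+4εD)x²) ≥ 0. Then D^(1+η)·x² ≤ 1/((1+ε)² + 4ε). -/
theorem stmt_5 (ε η x D : ℝ)
    (hε : 0 < ε) (hε1 : ε < 1) (hη : η = 2*ε/(1-ε))
    (hx : 0 < x) (hD : 0 < D)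
    (hsup : D ^ (-η) < ((1+ε)^2 + 4*ε*D) * x^2)
    (h : 0 ≤ -2/x + 2*x*(1+ε)^2*(D-1) / (D ^ (-η) - ((1+ε)^2 + 4*ε*D)*x^2)) :
    D ^ (1+η) * x^2 ≤ 1/((1+ε)^2 + 4*ε) := by
  set d : ℝ := D ^ (-η) - ((1+ε)^2 + 4*ε*D)*x^2 with hd
  have hdneg : d < 0 := by simp [hd]; linarith
  have hC : 0 < (1+ε)^2 + 4*ε := by positivity
  have key : 2/x ≤ 2*x*(1+ε)^2*(D-1) / d := by
    have e : -2/x = -(2/x) := by ring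
    linarith [e ▸ h]
  have h1 : 2*x*(1+ε)^2*(D-1) ≤ (2/x) * d := (le_div_iff_of_neg hdneg).mp key
  -- multiply by x/2 (positive)
  have h2 : x^2*(1+ε)^2*(D-1) ≤ d := by
    have := mul_le_mul_of_nonneg_left h1 (le_of_lt (by positivity : (0:ℝ) < x/2))
    have hx' : x ≠ 0 := ne_of_gt hx
    calc x^2*(1+ε)^2*(D-1) = (x/2) * (2*x*(1+ε)^2*(D-1)) := by ring
      _ ≤ (x/2) * ((2/x)*d) := this
      _ = d := by field_simp
  have h3 : ((1+ε)^2 + 4*ε) * D * x^2 ≤ D ^ (-η) := by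
    have : x^2*(1+ε)^2*(D-1) ≤ D ^ (-η) - ((1+ε)^2 + 4*ε*D)*x^2 := h2
    nlinarith [this]
  have hpos : (0:ℝ) < D ^ η := Real.rpow_pos_of_pos hD η
  have h4 : ((1+ε)^2 + 4*ε) * (D ^ (1+η) * x^2) ≤ 1 := by
    have := mul_le_mul_of_nonneg_left h3 (le_of_lt hpos)
    have e1 : D ^ η * (D ^ (-η)) = 1 := by
      rw [← Real.rpow_add hD]; simp
    have e2 : D ^ η * D = D ^ (1+η) := by
      rw [Real.rpow_add hD]; simp [Real.rpow_one, mul_comm]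
    calc ((1+ε)^2 + 4*ε) * (D ^ (1+η) * x^2)
        = D ^ η * (((1+ε)^2 + 4*ε) * D * x^2) := by rw [← e2]; ring
      _ ≤ D ^ η * D ^ (-η) := this
      _ = 1 := e1
  rw [le_div_iff₀ hC]
  linarith
end

section
/- Let ε ∈ (0,1), η = 2ε/(1−ε), and let D, W be differentiable on an interval I ⊂ (0,∞) with D > 0 and B := D^(−η) − [(W+ε)² − ε(W−1)² + 4εDW]x² ≠ 0 on I, satisfying D' = −2x(1−ε)D(W+ε)(D−W)/B and W' = (1−3W)/x + 2x(1+ε)W(W+ε)(D−W)/B. Set Π = D^(1+η). Then on I: d/dx( Π W x² ) = Π x (1 − W) and d/dx( Π W x³ ) = Π x². -/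
/-!
Writing `Π = D^(1+η)`, the `B`-terms in `(Π W)' = Π' W + Π W'` cancel because
`(1+η)(1-ε) = 1+ε`, leaving `(Π W)' = Π (1 - 3W)/x`. Both identities then follow from the
product rule with `x²` and `x³`.
-/

lemma one_add_div_mul_one_sub {ε : ℝ} (hε : ε ≠ 1) : (1 + 2 * ε / (1 - ε)) * (1 - ε) = 1 + ε := by
  have : (1 : ℝ) - ε ≠ 0 := sub_ne_zero.mpr hε.symm
  field_simp
  ring

lemma hasDerivAt_rpow_mul_of_larsonPenston {ε η x b : ℝ} {D W : ℝ → ℝ}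
    (hη : (1 + η) * (1 - ε) = 1 + ε) (hDx : D x ≠ 0)
    (hD' : HasDerivAt D (-2*x*(1-ε)*(D x)*(W x + ε)*(D x - W x)/b) x)
    (hW' : HasDerivAt W ((1 - 3*W x)/x + 2*x*(1+ε)*(W x)*(W x + ε)*(D x - W x)/b) x) :
    HasDerivAt (fun y => D y ^ (1 + η) * W y) (D x ^ (1 + η) * (1 - 3 * W x) / x) x := by
  refine ((hD'.rpow_const (p := 1 + η) (Or.inl hDx)).mul hW').congr_deriv ?_
  rw [add_sub_cancel_left, add_comm 1 η, Real.rpow_add_one hDx]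
  linear_combination (-2 * x * D x ^ η * D x * W x * (W x + ε) * (D x - W x) / b) * hη

theorem stmt_7_general (ε η : ℝ) (hε1 : ε < 1) (hη : η = 2*ε/(1-ε))
    (I : Set ℝ) (hI : I ⊆ Set.Ioi 0)
    (D W B : ℝ → ℝ)
    (hD : ∀ x ∈ I, 0 < D x)
    (hD' : ∀ x ∈ I,
      HasDerivAt D (-2*x*(1-ε)*(D x)*(W x + ε)*(D x - W x)/(B x)) x)
    (hW' : ∀ x ∈ I,
      HasDerivAt W ((1 - 3*W x)/x + 2*x*(1+ε)*(W x)*(W x + ε)*(D x - W x)/(B x)) x) :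
    ∀ x ∈ I,
      HasDerivAt (fun y => D y ^ (1+η) * W y * y^2) (D x ^ (1+η) * x * (1 - W x)) x ∧
      HasDerivAt (fun y => D y ^ (1+η) * W y * y^3) (D x ^ (1+η) * x^2) x := by
  intro x hx
  subst hη
  have hx0 : x ≠ 0 := (hI hx).ne'
  have hPW := hasDerivAt_rpow_mul_of_larsonPenston (one_add_div_mul_one_sub hε1.ne)
    (hD x hx).ne' (hD' x hx) (hW' x hx)
  constructor
  · refine (hPW.mul (hasDerivAt_pow 2 x)).congr_deriv ?_
    field_simp
    ring
  · refine (hPW.mul (hasDerivAt_pow 3 x)).congr_deriv ?_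
    field_simp
    ring

theorem stmt_7 (ε η : ℝ) (hε : 0 < ε) (hε1 : ε < 1) (hη : η = 2*ε/(1-ε))
    (I : Set ℝ) (hI : I ⊆ Set.Ioi 0)
    (D W B : ℝ → ℝ)
    (hD : ∀ x ∈ I, 0 < D x)
    (hB : ∀ x ∈ I, B x =
      D x ^ (-η) - ((W x + ε)^2 - ε*(W x - 1)^2 + 4*ε*(D x)*(W x)) * x^2)
    (hBne : ∀ x ∈ I, B x ≠ 0)
    (hD' : ∀ x ∈ I,
      HasDerivAt D (-2*x*(1-ε)*(D x)*(W x + ε)*(D x - W x)/(B x)) x)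
    (hW' : ∀ x ∈ I,
      HasDerivAt W ((1 - 3*W x)/x + 2*x*(1+ε)*(W x)*(W x + ε)*(D x - W x)/(B x)) x) :
    ∀ x ∈ I,
      HasDerivAt (fun y => D y ^ (1+η) * W y * y^2) (D x ^ (1+η) * x * (1 - W x)) x ∧
      HasDerivAt (fun y => D y ^ (1+η) * W y * y^3) (D x ^ (1+η) * x^2) x :=
  stmt_7_general ε η hε1 hη I hI D W B hD hD' hW'
end

section
/- Let ε ∈ (0,1), η = 2ε/(1−ε), and let d, w, χ be differentiable functions of Y on an interval not containing 0, with d > 0, χ > 0 and 𝒞 := (d·Y^(−2))^(−η)·Y² − χ²[(w+ε)² − ε(w−1)² + 4εwd] ≠ 0. Assume d' = (2χ²/Y)·d(w+ε)²(d−w)/𝒞, w' = −(w+ε)(1−3w)/((1−ε)Y) − (2(1+ε)χ²/((1−ε)Y))·w(w+ε)²(d−w)/𝒞, and χ' = (1−w)χ/((1−ε)Y). Then (d^(1+η)·w)' = −d^(1+η)·(w+ε)(1−3w)/((1−ε)Y) and (χ²·d^(1+η)·w)' = χ²·d^(1+η)·(w² + (1+3ε)w − ε)/((1−ε)Y). 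-/
/-!
Write `p = 1 + η = (1 + ε)/(1 - ε)`. The equations for `d` and `w` have the shape
`d' = d K` and `w' = a - p w K` with the same factor `K = 2χ²(w + ε)²(d - w)/(Y 𝒞)`, so in
`(d^p w)' = d^p (p w K + w')` the terms carrying `𝒞` cancel and `(d^p w)' = d^p a`.
The second identity is then the product rule with `(χ²)' = 2(1 - w)χ²/((1 - ε)Y)`.
-/

theorem hasDerivAt_rpow_mul_of_cancel {d w : ℝ → ℝ} {Y p a K : ℝ} (hd : 0 < d Y)
    (hd' : HasDerivAt d (d Y * K) Y) (hw' : HasDerivAt w (a - p * w Y * K) Y) :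
    HasDerivAt (fun z => d z ^ p * w z) (d Y ^ p * a) Y := by
  refine ((hd'.rpow_const (p := p) (Or.inl hd.ne')).fun_mul hw').congr_deriv ?_
  rw [Real.rpow_sub_one hd.ne']
  field_simp
  ring

theorem stmt_8_general (ε η : ℝ) (hε1 : ε < 1) (hη : η = 2*ε/(1-ε))
    (I : Set ℝ)
    (d w χ Cc : ℝ → ℝ)
    (hd : ∀ Y ∈ I, 0 < d Y)
    (hd' : ∀ Y ∈ I,
      HasDerivAt d (2*(χ Y)^2/Y * (d Y)*(w Y + ε)^2*(d Y - w Y)/(Cc Y)) Y)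
    (hw' : ∀ Y ∈ I,
      HasDerivAt w (-(w Y + ε)*(1 - 3*w Y)/((1-ε)*Y)
        - 2*(1+ε)*(χ Y)^2/((1-ε)*Y) * (w Y)*(w Y + ε)^2*(d Y - w Y)/(Cc Y)) Y)
    (hχ' : ∀ Y ∈ I, HasDerivAt χ ((1 - w Y)*(χ Y)/((1-ε)*Y)) Y) :
    ∀ Y ∈ I,
      HasDerivAt (fun z => d z ^ (1+η) * w z)
        (-(d Y ^ (1+η)) * (w Y + ε)*(1 - 3*w Y)/((1-ε)*Y)) Y ∧
      HasDerivAt (fun z => (χ z)^2 * d z ^ (1+η) * w z)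
        ((χ Y)^2 * d Y ^ (1+η) * ((w Y)^2 + (1+3*ε)*(w Y) - ε)/((1-ε)*Y)) Y := by
  intro Y hY
  have h1ε : 1 - ε ≠ 0 := sub_ne_zero.2 hε1.ne'
  have hp : 1 + η = (1 + ε) / (1 - ε) := by rw [hη]; field_simp; ring
  have hdw := hasDerivAt_rpow_mul_of_cancel (hd Y hY) (p := 1 + η)
    (a := -(w Y + ε) * (1 - 3 * w Y) / ((1 - ε) * Y))
    (K := 2 * χ Y ^ 2 / Y * (w Y + ε) ^ 2 * (d Y - w Y) / Cc Y)
    ((hd' Y hY).congr_deriv (by ring))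
    ((hw' Y hY).congr_deriv (by rw [hp]; simp only [div_eq_mul_inv, mul_inv]; ring))
  refine ⟨hdw.congr_deriv (by ring), ?_⟩
  simp only [mul_assoc (χ _ ^ 2)]
  refine (((hχ' Y hY).fun_pow 2).fun_mul hdw).congr_deriv ?_
  simp only [Nat.cast_ofNat, Nat.reduceSub, pow_one]
  ring

theorem stmt_8 (ε η : ℝ) (hε : 0 < ε) (hε1 : ε < 1) (hη : η = 2*ε/(1-ε))
    (I : Set ℝ) (hI0 : (0:ℝ) ∉ I)
    (d w χ Cc : ℝ → ℝ)
    (hd : ∀ Y ∈ I, 0 < d Y) (hχ : ∀ Y ∈ I, 0 < χ Y)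
    (hCc : ∀ Y ∈ I, Cc Y = (d Y / Y^2) ^ (-η) * Y^2
      - (χ Y)^2 * ((w Y + ε)^2 - ε*(w Y - 1)^2 + 4*ε*(w Y)*(d Y)))
    (hCne : ∀ Y ∈ I, Cc Y ≠ 0)
    (hd' : ∀ Y ∈ I,
      HasDerivAt d (2*(χ Y)^2/Y * (d Y)*(w Y + ε)^2*(d Y - w Y)/(Cc Y)) Y)
    (hw' : ∀ Y ∈ I,
      HasDerivAt w (-(w Y + ε)*(1 - 3*w Y)/((1-ε)*Y)
        - 2*(1+ε)*(χ Y)^2/((1-ε)*Y) * (w Y)*(w Y + ε)^2*(d Y - w Y)/(Cc Y)) Y)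
    (hχ' : ∀ Y ∈ I, HasDerivAt χ ((1 - w Y)*(χ Y)/((1-ε)*Y)) Y) :
    ∀ Y ∈ I,
      HasDerivAt (fun z => d z ^ (1+η) * w z)
        (-(d Y ^ (1+η)) * (w Y + ε)*(1 - 3*w Y)/((1-ε)*Y)) Y ∧
      HasDerivAt (fun z => (χ z)^2 * d z ^ (1+η) * w z)
        ((χ Y)^2 * d Y ^ (1+η) * ((w Y)^2 + (1+3*ε)*(w Y) - ε)/((1-ε)*Y)) Y :=
  stmt_8_general ε η hε1 hη I d w χ Cc hd hd' hw' hχ'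
end

section
/- Let a > 0, Y₁ < Y₀ < 0, and let w : (Y₁, Y₀] → ℝ be differentiable with w(Y) > 1 for all Y and w'(Y) ≤ −a·w(Y)(w(Y)−1)/(−Y) for all Y ∈ (Y₁, Y₀]. Set C := (1 − 1/w(Y₀))·(−Y₀)^(−a) > 0. Then for every Y ∈ (Y₁, Y₀]: C·(−Y)^a < 1 and w(Y) ≥ 1/(1 − C·(−Y)^a). In particular, Y₁ ≥ −C^(−1/a). -/
/-!
Along a solution of the Riccati inequality `w' ≤ -a w (w - 1) / (-Y)` the quantity
`(1 - 1/w(Y)) (-Y)^(-a)` has derivative `(-Y)^(-a) / w² · (w' + a w (w - 1) / (-Y)) ≤ 0`, so it is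
nonincreasing in `Y`. Hence `(1 - 1/w(Y)) (-Y)^(-a) ≥ C` for `Y ≤ Y₀`, i.e.
`1/w(Y) ≤ 1 - C (-Y)^a`; since `1/w(Y) > 0` this forces `C (-Y)^a < 1`, that is `-Y < C^(-1/a)`,
on the whole interval, which therefore cannot reach past `-C^(-1/a)`.
-/

open Set

noncomputable def riccatiInvariant (a : ℝ) (w : ℝ → ℝ) (Y : ℝ) : ℝ :=
  (1 - 1 / w Y) * (-Y) ^ (-a)

section RiccatiInvariant

variable {a : ℝ} {w : ℝ → ℝ}

lemma riccatiInvariant_pos {Y : ℝ} (hw : 1 < w Y) (hY : Y < 0) : 0 < riccatiInvariant a w Y := by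
  have hw_inv : 1 / w Y < 1 := (div_lt_one (one_pos.trans hw)).2 hw
  exact mul_pos (sub_pos.2 hw_inv) (Real.rpow_pos_of_pos (neg_pos.2 hY) _)

lemma hasDerivAt_riccatiInvariant {w' Y : ℝ} (hw : HasDerivAt w w' Y) (hw0 : w Y ≠ 0)
    (hY : Y < 0) :
    HasDerivAt (riccatiInvariant a w)
      ((-Y) ^ (-a) / w Y ^ 2 * (w' + a * w Y * (w Y - 1) / (-Y))) Y := by
  have hY' : 0 < -Y := neg_pos.2 hY
  have h_inv : HasDerivAt (fun Y => 1 - 1 / w Y) (w' / w Y ^ 2) Y := by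
    simp only [one_div]
    exact ((hasDerivAt_const Y 1).sub (hw.inv hw0)).congr_deriv (by ring)
  have h_pow : HasDerivAt (fun Y : ℝ => (-Y) ^ (-a)) (a * (-Y) ^ (-a - 1)) Y :=
    ((Real.hasDerivAt_rpow_const (Or.inl hY'.ne')).comp Y (hasDerivAt_neg Y)).congr_deriv
      (by ring)
  refine (h_inv.mul h_pow).congr_deriv ?_
  rw [Real.rpow_sub hY', Real.rpow_one]
  field_simp

lemma antitoneOn_riccatiInvariant {w' : ℝ → ℝ} {s : Set ℝ} (hs : Convex ℝ s)
    (hneg : ∀ Y ∈ s, Y < 0) (hw0 : ∀ Y ∈ s, w Y ≠ 0)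
    (hderiv : ∀ Y ∈ s, HasDerivAt w (w' Y) Y)
    (hineq : ∀ Y ∈ s, w' Y ≤ -a * w Y * (w Y - 1) / (-Y)) :
    AntitoneOn (riccatiInvariant a w) s := by
  have hg : ∀ Y ∈ s, HasDerivAt (riccatiInvariant a w)
      ((-Y) ^ (-a) / w Y ^ 2 * (w' Y + a * w Y * (w Y - 1) / (-Y))) Y := fun Y hY =>
    hasDerivAt_riccatiInvariant (hderiv Y hY) (hw0 Y hY) (hneg Y hY)
  refine antitoneOn_of_hasDerivWithinAt_nonpos hs
    (fun Y hY => (hg Y hY).continuousAt.continuousWithinAt)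
    (fun Y hY => (hg Y (interior_subset hY)).hasDerivWithinAt) fun Y hY => ?_
  have hY := interior_subset hY
  have hbracket : w' Y + a * w Y * (w Y - 1) / (-Y) ≤ 0 := by
    have := hineq Y hY
    rw [neg_mul, neg_mul, neg_div] at this
    linarith
  exact mul_nonpos_of_nonneg_of_nonpos
    (div_nonneg (Real.rpow_nonneg (neg_pos.2 (hneg Y hY)).le _) (sq_nonneg _)) hbracket

lemma lt_one_and_inv_le_of_le_riccatiInvariant {C Y : ℝ} (hw : 0 < w Y) (hY : Y < 0)
    (hC : C ≤ riccatiInvariant a w Y) :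
    C * (-Y) ^ a < 1 ∧ 1 / (1 - C * (-Y) ^ a) ≤ w Y := by
  have hpow : 0 < (-Y) ^ a := Real.rpow_pos_of_pos (neg_pos.2 hY) a
  have hle : C * (-Y) ^ a ≤ 1 - 1 / w Y := by
    rwa [riccatiInvariant, Real.rpow_neg (neg_pos.2 hY).le, ← div_eq_mul_inv,
      le_div_iff₀ hpow] at hC
  have hinv : 0 < 1 / w Y := one_div_pos.2 hw
  refine ⟨by linarith, ?_⟩
  rw [div_le_iff₀ (by linarith), ← div_le_iff₀' hw]
  linarith

end RiccatiInvariant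

lemma one_le_mul_rpow_of_rpow_neg_inv_le {a C x : ℝ} (ha : 0 < a) (hC : 0 < C)
    (hx : C ^ (-1 / a) ≤ x) : 1 ≤ C * x ^ a := by
  have hroot : (C ^ (-1 / a)) ^ a = C⁻¹ := by
    rw [← Real.rpow_mul hC.le, div_mul_cancel₀ _ ha.ne', Real.rpow_neg_one]
  calc 1 = C * (C ^ (-1 / a)) ^ a := by rw [hroot, mul_inv_cancel₀ hC.ne']
    _ ≤ C * x ^ a := by gcongr

lemma neg_rpow_neg_inv_le_of_forall_mul_rpow_lt_one {a C Y₀ Y₁ : ℝ} (ha : 0 < a) (hC : 0 < C)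
    (hY : Y₁ < Y₀) (hlt : ∀ Y ∈ Ioc Y₁ Y₀, C * (-Y) ^ a < 1) : -(C ^ (-1 / a)) ≤ Y₁ := by
  by_contra! hY₁
  have hmem : min (-(C ^ (-1 / a))) Y₀ ∈ Ioc Y₁ Y₀ := ⟨lt_min hY₁ hY, min_le_right _ _⟩
  have hroot : C ^ (-1 / a) ≤ -min (-(C ^ (-1 / a))) Y₀ := le_neg.2 (min_le_left _ _)
  exact (hlt _ hmem).not_ge (one_le_mul_rpow_of_rpow_neg_inv_le ha hC hroot)

theorem stmt_9 (a Y₀ Y₁ : ℝ) (ha : 0 < a) (hY : Y₁ < Y₀) (hY0 : Y₀ < 0)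
    (w w' : ℝ → ℝ)
    (hw1 : ∀ Y ∈ Set.Ioc Y₁ Y₀, 1 < w Y)
    (hderiv : ∀ Y ∈ Set.Ioc Y₁ Y₀, HasDerivAt w (w' Y) Y)
    (hineq : ∀ Y ∈ Set.Ioc Y₁ Y₀, w' Y ≤ -a * (w Y) * (w Y - 1) / (-Y))
    (C : ℝ) (hC : C = (1 - 1/(w Y₀)) * (-Y₀) ^ (-a)) :
    0 < C ∧
    (∀ Y ∈ Set.Ioc Y₁ Y₀, C * (-Y) ^ a < 1 ∧ 1/(1 - C * (-Y) ^ a) ≤ w Y) ∧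
    Y₁ ≥ -(C ^ (-1/a)) := by
  have hneg : ∀ Y ∈ Ioc Y₁ Y₀, Y < 0 := fun Y hY' => hY'.2.trans_lt hY0
  have hw0 : ∀ Y ∈ Ioc Y₁ Y₀, 0 < w Y := fun Y hY' => one_pos.trans (hw1 Y hY')
  have hY₀ : Y₀ ∈ Ioc Y₁ Y₀ := ⟨hY, le_rfl⟩
  have hC' : C = riccatiInvariant a w Y₀ := hC
  have hanti := antitoneOn_riccatiInvariant (convex_Ioc Y₁ Y₀) hneg
    (fun Y hY' => (hw0 Y hY').ne') hderiv hineq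
  have hbound : ∀ Y ∈ Ioc Y₁ Y₀, C * (-Y) ^ a < 1 ∧ 1 / (1 - C * (-Y) ^ a) ≤ w Y :=
    fun Y hY' => lt_one_and_inv_le_of_le_riccatiInvariant (hw0 Y hY') (hneg Y hY')
      (hC' ▸ hanti hY' hY₀ hY'.2)
  have hC_pos : 0 < C := hC' ▸ riccatiInvariant_pos (hw1 Y₀ hY₀) hY0
  exact ⟨hC_pos, hbound,
    neg_rpow_neg_inv_le_of_forall_mul_rpow_lt_one ha hC_pos hY fun Y hY' => (hbound Y hY').1⟩
end

section
/- Let ε ∈ (0, 1/2), η = 2ε/(1−ε), m > 0, Q₀ ∈ (0,1), and d̂, ŵ > 0 satisfy: d̂ = (m/2)·Q₀(1 + ε(4Q₀ − 1))/(1 − Q₀), 1/ŵ = 3/((1−ε)m) − (2(1+η)/m)·(1 − Q₀)/(1 + ε(4Q₀ − 1)), and Q₀ = d̂/ŵ. Then Q₀ = 1/4, d̂ = m/6 and ŵ = 2m/3. -/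
/-! Write `A = 1 + ε(4Q₀ - 1)`. Eliminating `d̂` between the first and third relations gives
`1/ŵ = 2(1 - Q₀)/(mA)`; inserting this into the second relation and clearing the denominator
`(1 - ε)mA` (using `1 + η = (1 + ε)/(1 - ε)`) leaves `4(1 - Q₀) = 3A`, that is
`(4Q₀ - 1)(1 + 3ε) = 0`. Hence `Q₀ = 1/4`, so `A = 1`, and `d̂`, `ŵ` follow. -/

lemma one_add_two_mul_div_one_sub {ε : ℝ} (hε : ε ≠ 1) :
    1 + 2 * ε / (1 - ε) = (1 + ε) / (1 - ε) := by
  have : 1 - ε ≠ 0 := sub_ne_zero.mpr hε.symm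
  field_simp
  ring

lemma one_div_eq_of_eq_mul_div {m Q A d w : ℝ} (hm : m ≠ 0) (hQ : Q ≠ 0) (hQ1 : Q ≠ 1)
    (hA : A ≠ 0) (hw : w ≠ 0) (hd : d = m / 2 * (Q * A / (1 - Q))) (hQd : Q = d / w) :
    1 / w = 2 * (1 - Q) / (m * A) := by
  have h1Q : 1 - Q ≠ 0 := sub_ne_zero.mpr hQ1.symm
  rw [hd, eq_div_iff hw] at hQd
  field_simp at hQd ⊢
  linear_combination -hQd

lemma four_mul_one_sub_eq_three_mul {ε m Q A : ℝ} (hε : ε ≠ 1) (hm : m ≠ 0) (hA : A ≠ 0)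
    (h : 2 * (1 - Q) / (m * A) = 3 / ((1 - ε) * m) - 2 * ((1 + ε) / (1 - ε)) / m * ((1 - Q) / A)) :
    4 * (1 - Q) = 3 * A := by
  have h1ε : 1 - ε ≠ 0 := sub_ne_zero.mpr hε.symm
  field_simp at h
  linear_combination h

theorem stmt_10_general (ε η m Q₀ dh wh : ℝ)
    (hε : 0 < ε) (hε1 : ε < 1/2) (hη : η = 2*ε/(1-ε))
    (hm : 0 < m) (hQ0 : 0 < Q₀) (hQ1 : Q₀ < 1) (hwh : 0 < wh)
    (h1 : dh = m/2 * (Q₀*(1 + ε*(4*Q₀ - 1))/(1 - Q₀)))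
    (h2 : 1/wh = 3/((1-ε)*m) - 2*(1+η)/m * ((1 - Q₀)/(1 + ε*(4*Q₀ - 1))))
    (h3 : Q₀ = dh/wh) :
    Q₀ = 1/4 ∧ dh = m/6 ∧ wh = 2*m/3 := by
  have hε' : ε ≠ 1 := by linarith
  have hA : 1 + ε * (4 * Q₀ - 1) ≠ 0 := by nlinarith
  have hw := one_div_eq_of_eq_mul_div hm.ne' hQ0.ne' hQ1.ne hA hwh.ne' h1 h3
  rw [hw, hη, one_add_two_mul_div_one_sub hε'] at h2
  have hQ : Q₀ = 1 / 4 := by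
    have hkey : (4 * Q₀ - 1) * (1 + 3 * ε) = 0 := by
      linear_combination -four_mul_one_sub_eq_three_mul hε' hm.ne' hA h2
    rcases mul_eq_zero.mp hkey with h | h
    · linarith
    · linarith
  subst hQ
  have hdh : dh = m / 6 := by rw [h1]; ring
  refine ⟨rfl, hdh, ?_⟩
  rw [hdh, eq_div_iff hwh.ne'] at h3
  linarith

theorem stmt_10 (ε η m Q₀ dh wh : ℝ)
    (hε : 0 < ε) (hε1 : ε < 1/2) (hη : η = 2*ε/(1-ε))
    (hm : 0 < m) (hQ0 : 0 < Q₀) (hQ1 : Q₀ < 1) (hdh : 0 < dh) (hwh : 0 < wh)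
    (h1 : dh = m/2 * (Q₀*(1 + ε*(4*Q₀ - 1))/(1 - Q₀)))
    (h2 : 1/wh = 3/((1-ε)*m) - 2*(1+η)/m * ((1 - Q₀)/(1 + ε*(4*Q₀ - 1))))
    (h3 : Q₀ = dh/wh) :
    Q₀ = 1/4 ∧ dh = m/6 ∧ wh = 2*m/3 :=
  stmt_10_general ε η m Q₀ dh wh hε hε1 hη hm hQ0 hQ1 hwh h1 h2 h3
end
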